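/- Let R be a commutative ring, let f : E ⟶ F be a morphism of ℤ-indexed cochain complexes of R-modules, and let n be a natural number. Define the chain map g_n : E^{⊕n} ⟶ F^{⊕(n+1)} whose j-th component (0 ≤ j ≤ n) on the summands is f(x_{j+1}) − f(x_j), with the convention x_0 = x_{n+1} = 0 (each summand E contributes +f in one slot of F^{⊕(n+1)} and −f in the next). Then the mapping cone of g_n is isomorphic, in the homotopy category of cochain complexes of R-modules, to F ⊕ Cone(f)^{⊕n}, the biproduct of F with n copies of the mapping cone of f. -/

import Mathlib

open CategoryTheory CategoryTheory.Limits

attribute [local instance] CategoryTheory.Abelian.hasFiniteBiproducts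

open ZeroObject

/-!
Writing `δ : F^{⊕n} ⟶ F^{⊕(n+1)}` for the map `e_j ↦ e_j - e_{j+1}`, one has
`g = f^{⊕n} ≫ δ`. The vectors `e_n` and `e_j - e_{j+1}` (`j < n`) form a basis of
`F^{⊕(n+1)}` (the inverse change of basis takes partial sums), so the arrow `g` is isomorphic
to `0 ⊕ f^{⊕n} : 0 ⊞ E^{⊕n} ⟶ F ⊞ F^{⊕n}`. Mapping cones are functorial in the arrow and
additive, hence commute with finite biproducts of arrows, and the cone of `0 ⟶ F` is `F`.
This even gives an isomorphism of complexes.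
-/

namespace CochainComplex.mappingCone

open HomComplex

variable {C : Type*} [Category C] [Preadditive C] [HasBinaryBiproducts C]

section map

variable {K₁ L₁ K₂ L₂ : CochainComplex C ℤ} (φ₁ : K₁ ⟶ L₁) (φ₂ : K₂ ⟶ L₂)

lemma map_add (a a' : K₁ ⟶ K₂) (b b' : L₁ ⟶ L₂) (comm : φ₁ ≫ b = a ≫ φ₂)
    (comm' : φ₁ ≫ b' = a' ≫ φ₂) :
    map φ₁ φ₂ (a + a') (b + b') (by simp [comm, comm']) =
      map φ₁ φ₂ a b comm + map φ₁ φ₂ a' b' comm' := by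
  ext n
  simp [ext_from_iff _ (n + 1) n rfl, map]

lemma map_zero : map φ₁ φ₂ 0 0 (by simp) = 0 := by
  ext n
  simp [ext_from_iff _ (n + 1) n rfl, map]

lemma map_sum {ι : Type*} (s : Finset ι) (a : ι → (K₁ ⟶ K₂)) (b : ι → (L₁ ⟶ L₂))
    (comm : ∀ i, φ₁ ≫ b i = a i ≫ φ₂) :
    map φ₁ φ₂ (∑ i ∈ s, a i) (∑ i ∈ s, b i)
        (by simp only [Preadditive.comp_sum, Preadditive.sum_comp, comm]) =
      ∑ i ∈ s, map φ₁ φ₂ (a i) (b i) (comm i) := by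
  classical
  induction s using Finset.induction with
  | empty => simpa using map_zero φ₁ φ₂
  | insert i s hi ih => simp only [Finset.sum_insert hi, ← ih, ← map_add]

noncomputable def biprodMapIso :
    mappingCone (biprod.map φ₁ φ₂) ≅ mappingCone φ₁ ⊞ mappingCone φ₂ where
  hom := biprod.lift (map _ _ biprod.fst biprod.fst (by simp))
    (map _ _ biprod.snd biprod.snd (by simp))
  inv := biprod.desc (map _ _ biprod.inl biprod.inl (by simp))
    (map _ _ biprod.inr biprod.inr (by simp))
  hom_inv_id := by
    simp only [biprod.lift_desc, ← map_comp, ← map_add, biprod.total, map_id]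
  inv_hom_id := by
    apply biprod.hom_ext' <;> apply biprod.hom_ext <;> simp [← map_comp, map_id, map_zero]

end map

noncomputable def biproductMapIso {ι : Type} [Fintype ι] {K L : ι → CochainComplex C ℤ}
    (φ : ∀ i, K i ⟶ L i) [HasBiproduct K] [HasBiproduct L]
    [HasBiproduct fun i => mappingCone (φ i)] :
    mappingCone (biproduct.map φ) ≅ ⨁ fun i => mappingCone (φ i) where
  hom := biproduct.lift fun i => map _ _ (biproduct.π K i) (biproduct.π L i) (by simp)
  inv := biproduct.desc fun i => map _ _ (biproduct.ι K i) (biproduct.ι L i) (by simp)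
  hom_inv_id := by
    simp only [biproduct.lift_desc, ← map_comp, ← map_sum, biproduct.total, map_id]
  inv_hom_id := by
    refine biproduct.hom_ext' _ _ fun i => biproduct.hom_ext _ _ fun j => ?_
    simp only [biproduct.ι_desc_assoc, Category.assoc, biproduct.lift_π, ← map_comp]
    rcases eq_or_ne i j with rfl | hij
    · simp [map_id]
    · simp [biproduct.ι_π_ne _ hij, map_zero]

lemma isIso_inr_of_isZero {K L : CochainComplex C ℤ} (φ : K ⟶ L) (hK : IsZero K) :
    IsIso (inr φ) := by
  refine ⟨desc φ 0 (𝟙 L) (by simp [hK.eq_of_src φ 0]), inr_desc _ _ _ _, ?_⟩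
  ext n
  simp only [HomologicalComplex.comp_f, HomologicalComplex.id_f, ext_from_iff _ (n + 1) n rfl,
    inl_v_desc_f_assoc, Cochain.zero_v, zero_comp, Category.comp_id, inr_f_desc_f_assoc,
    Category.id_comp, and_true]
  exact ((HomologicalComplex.eval _ _ (n + 1)).map_isZero hK).eq_of_src _ _

end CochainComplex.mappingCone

section biproductDiff

variable {C : Type*} [Category C] [Preadditive C] [HasFiniteBiproducts C] (X : C) (n : ℕ)

noncomputable def biproductDiff : (⨁ fun _ : Fin n => X) ⟶ ⨁ fun _ : Fin (n + 1) => X :=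
  biproduct.desc fun j => biproduct.ι (fun _ => X) j.castSucc - biproduct.ι (fun _ => X) j.succ

noncomputable def biproductPartialSums : (⨁ fun _ : Fin (n + 1) => X) ⟶ ⨁ fun _ : Fin n => X :=
  biproduct.matrix fun i j => if i ≤ j.castSucc then 𝟙 X else 0

lemma biproductDiff_comp_partialSums :
    biproductDiff X n ≫ biproductPartialSums X n = 𝟙 _ := by
  refine biproduct.hom_ext' _ _ fun i => biproduct.hom_ext _ _ fun j => ?_
  simp only [biproductDiff, biproductPartialSums, biproduct.ι_desc_assoc, Preadditive.sub_comp,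
    biproduct.ι_matrix, Fin.castSucc_le_castSucc_iff, Fin.succ_le_castSucc_iff, biproduct.lift_π,
    Category.comp_id, biproduct.ι_π, eqToHom_refl, dite_eq_ite]
  split_ifs <;> grind

lemma biproduct_lift_sub_eq_map_comp_biproductDiff {Y : C} (f : Y ⟶ X)
    (P : ℕ → ((⨁ fun _ : Fin n => Y) ⟶ Y))
    (hP : ∀ (i : Fin n) (k : ℕ),
      biproduct.ι (fun _ => Y) i ≫ P k = if k = (i : ℕ) + 1 then 𝟙 Y else 0) :
    (biproduct.lift fun j : Fin (n + 1) => P ((j : ℕ) + 1) ≫ f - P (j : ℕ) ≫ f) =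
      biproduct.map (fun _ => f) ≫ biproductDiff X n := by
  refine biproduct.hom_ext' _ _ fun i => biproduct.hom_ext _ _ fun j => ?_
  simp only [Category.assoc, biproduct.lift_π, Preadditive.comp_sub, reassoc_of% hP,
    Nat.add_right_cancel_iff, biproductDiff, biproduct.map_desc, biproduct.ι_desc,
    Preadditive.sub_comp, biproduct.ι_π, eqToHom_refl, dite_eq_ite]
  split_ifs <;> simp_all [Fin.ext_iff]

variable [HasBinaryBiproducts C]

instance isIso_biprod_desc_ι_last_biproductDiff :
    IsIso (biprod.desc (biproduct.ι (fun _ => X) (Fin.last n)) (biproductDiff X n)) := by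
  set u := biprod.desc (biproduct.ι (fun _ => X) (Fin.last n)) (biproductDiff X n)
  set v := biprod.lift (biproduct.desc fun _ => 𝟙 X) (biproductPartialSums X n)
  have hom_inv : u ≫ v = 𝟙 _ := by
    apply biprod.hom_ext' <;> apply biprod.hom_ext
    · simp [u, v]
    · ext j
      simp [u, v, biproductPartialSums]
    · ext j
      simp [u, v, biproductDiff]
    · simp [u, v, biproductDiff_comp_partialSums]
  refine ⟨v, hom_inv, biproduct.hom_ext' _ _ fun i => ?_⟩
  -- `u ≫ v = 𝟙` already forces `v ≫ u = 𝟙` once every `e_i` lies in the image of `u`,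
  -- which follows by descending induction from `e_i = e_{i+1} + u (0, e_i)`.
  obtain ⟨w, hw⟩ : ∃ w, w ≫ u = biproduct.ι _ i := by
    induction i using Fin.reverseInduction with
    | last => exact ⟨biprod.inl, by simp [u]⟩
    | cast i ih =>
      obtain ⟨w, hw⟩ := ih
      refine ⟨w + biproduct.ι (fun _ : Fin n => X) i ≫ biprod.inr, ?_⟩
      rw [Preadditive.add_comp, hw]
      simp [u, biproductDiff]
  rw [← hw]
  simp [reassoc_of% hom_inv]

noncomputable def biproductDiffIso : X ⊞ (⨁ fun _ : Fin n => X) ≅ ⨁ fun _ : Fin (n + 1) => X :=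
  asIso (biprod.desc (biproduct.ι (fun _ => X) (Fin.last n)) (biproductDiff X n))

end biproductDiff

/-- For a morphism `f : E ⟶ F` of `ℤ`-indexed cochain complexes of `R`-modules and `n : ℕ`,
let `g : E^{⊕n} ⟶ F^{⊕(n+1)}` be the chain map whose `j`-th component (`0 ≤ j ≤ n`) is
`f (x_{j+1}) - f (x_j)` with the convention `x₀ = x_{n+1} = 0` (here `P i` is the
extension-by-zero projection onto the `i`-th summand in the `1`-based indexing).  Then the
mapping cone of `g` is isomorphic, in the homotopy category of cochain complexes of
`R`-modules, to `F ⊞ Cone(f)^{⊕n}`. -/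
theorem mappingCone_cech_conerve_iso (R : Type*) [CommRing R]
    {E F : CochainComplex (ModuleCat R) ℤ} (f : E ⟶ F) (n : ℕ)
    (P : ℕ → ((⨁ fun _ : Fin n => E) ⟶ E))
    (hP : ∀ i : ℕ, P i = if h : 1 ≤ i ∧ i ≤ n
      then biproduct.π (fun _ : Fin n => E) (⟨i - 1, by omega⟩ : Fin n) else 0)
    (g : (⨁ fun _ : Fin n => E) ⟶ (⨁ fun _ : Fin (n + 1) => F))
    (hg : g = biproduct.lift fun j : Fin (n + 1) =>
      P ((j : ℕ) + 1) ≫ f - P (j : ℕ) ≫ f) :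
    Nonempty
      ((HomotopyCategory.quotient (ModuleCat R) (ComplexShape.up ℤ)).obj
          (CochainComplex.mappingCone g) ≅
        (HomotopyCategory.quotient (ModuleCat R) (ComplexShape.up ℤ)).obj
          (F ⊞ ⨁ fun _ : Fin n => CochainComplex.mappingCone f)) := by
  have ι_comp_P (i : Fin n) (k : ℕ) :
      biproduct.ι (fun _ => E) i ≫ P k = if k = (i : ℕ) + 1 then 𝟙 E else 0 := by
    rw [hP]
    split_ifs <;> simp [biproduct.ι_π, Fin.ext_iff] <;> omega
  have hg' : g = biproduct.map (fun _ => f) ≫ biproductDiff F n := by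
    rw [hg, biproduct_lift_sub_eq_map_comp_biproductDiff F n f P ι_comp_P]
  let e : Arrow.mk (biprod.map (0 : 0 ⟶ F) (biproduct.map fun _ => f)) ≅ Arrow.mk g :=
    Arrow.isoMk (isoZeroBiprod (isZero_zero _)).symm (biproductDiffIso F n) (by
      apply biprod.hom_ext' <;> simp [hg', biproductDiffIso])
  have := CochainComplex.mappingCone.isIso_inr_of_isZero (0 : 0 ⟶ F) (isZero_zero _)
  exact ⟨(HomotopyCategory.quotient _ _).mapIso <|
    (HomologicalComplex.homotopyCofiber.mapArrowIso _ _ (fun j => ⟨j - 1, by simp⟩) e).symm ≪≫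
      CochainComplex.mappingCone.biprodMapIso _ _ ≪≫
      biprod.mapIso (asIso (CochainComplex.mappingCone.inr _)).symm
        (CochainComplex.mappingCone.biproductMapIso _)⟩
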